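/- arXiv:1703.00043 — 6 statements merged into one kernel-verified Lean document; each statement's English description precedes it below -/
import Mathlib

section
/- Let t ≥ 1 and let f be a boolean function on finitely many variables that is computed by some t-clipped decision tree. Then for every real p with 0 ≤ p ≤ 1, every integer d ≥ 0, and a random p-restriction ρ, the probability that the restricted function f|_ρ requires decision-tree depth at least d is at most (4·p·2^t)^d, i.e. Pr_ρ[DT_depth(f|_ρ) ≥ d] ≤ (4p2^t)^d. -/
/-! ## Decision trees -/

/-- Binary decision trees over a variable index type `ι`.  An internal vertex
`node i t0 t1` queries variable `i`; the `0`-edge leads to `t0`, the `1`-edge to `t1`. -/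
inductive DTree (ι : Type) : Type where
  | leaf : Bool → DTree ι
  | node : ι → DTree ι → DTree ι → DTree ι

namespace DTree

variable {ι : Type}

/-- Evaluate a decision tree on an input. -/
def eval : DTree ι → (ι → Bool) → Bool
  | leaf b, _ => b
  | node i t0 t1, x => if x i then t1.eval x else t0.eval x

/-- Depth: the number of edges on the longest root-to-leaf path. -/
def depth : DTree ι → ℕ
  | leaf _ => 0
  | node _ t0 t1 => max t0.depth t1.depth + 1

/-- Distance from the root to the closest leaf. -/
def minLeafDepth : DTree ι → ℕ
  | leaf _ => 0
  | node _ t0 t1 => min t0.minLeafDepth t1.minLeafDepth + 1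

/-- A tree is `t`-clipped if every vertex is within distance `t` of some leaf. -/
def Clipped (t : ℕ) : DTree ι → Prop
  | leaf _ => True
  | node _ t0 t1 =>
      min t0.minLeafDepth t1.minLeafDepth + 1 ≤ t ∧ Clipped t t0 ∧ Clipped t t1

/-- No variable in `seen` (nor any variable already queried above) is queried again:
this captures "no variable appears more than once on any root-to-leaf path". -/
def ReadOnceFrom : List ι → DTree ι → Prop
  | _, leaf _ => True
  | seen, node i t0 t1 =>
      i ∉ seen ∧ ReadOnceFrom (i :: seen) t0 ∧ ReadOnceFrom (i :: seen) t1

/-- No variable appears more than once on any root-to-leaf path. -/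
def ReadOnce (T : DTree ι) : Prop := T.ReadOnceFrom []

/-- `T` computes the boolean function `f`. -/
def Computes (T : DTree ι) (f : (ι → Bool) → Bool) : Prop := ∀ x, T.eval x = f x

/-- The list of all variables labelling internal vertices of the tree. -/
def nodeVars : DTree ι → List ι
  | leaf _ => []
  | node i t0 t1 => i :: (t0.nodeVars ++ t1.nodeVars)

/-- The tree has some leaf labelled `b`. -/
def HasLeaf (b : Bool) : DTree ι → Prop
  | leaf c => c = b
  | node _ t0 t1 => HasLeaf b t0 ∨ HasLeaf b t1

/-- From every internal vertex there is a path to a leaf labelled 0 (`false`)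
and a path to a leaf labelled 1 (`true`). -/
def EverySplit : DTree ι → Prop
  | leaf _ => True
  | node _ t0 t1 =>
      (HasLeaf true t0 ∨ HasLeaf true t1) ∧ (HasLeaf false t0 ∨ HasLeaf false t1) ∧
        EverySplit t0 ∧ EverySplit t1

/-- Variable `y` labels some internal vertex at distance `d` (edges) from the root. -/
def OccursAt (y : ι) : ℕ → DTree ι → Prop
  | _, leaf _ => False
  | 0, node i _ _ => i = y
  | d + 1, node _ t0 t1 => OccursAt y d t0 ∨ OccursAt y d t1

end DTree

/-- `DTdepth f` is the minimum depth of a decision tree computing `f`. -/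
noncomputable def DTdepth {ι : Type} (f : (ι → Bool) → Bool) : ℕ :=
  sInf {d | ∃ T : DTree ι, T.ReadOnce ∧ T.Computes f ∧ T.depth ≤ d}

/-! ## Restrictions -/

/-- The function obtained by fixing each variable `i` with `ρ i = some b` to `b`
(variables with `ρ i = none`, i.e. assigned `*`, are left free). -/
def restrictFun {ι : Type} (f : (ι → Bool) → Bool) (ρ : ι → Option Bool) :
    (ι → Bool) → Bool :=
  fun x => f (fun i => (ρ i).getD (x i))

open Classical in
/-- The probability of the event `E` under a random `p`-restriction: each variable
independently gets `*` (i.e. `none`) with probability `p`, and each of the values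
`0`, `1` with probability `(1-p)/2`. -/
noncomputable def restrProb {ι : Type} [Fintype ι] [DecidableEq ι] (p : ℝ)
    (E : (ι → Option Bool) → Prop) : ℝ :=
  ∑ ρ : ι → Option Bool,
    (if E ρ then ∏ i : ι, (if ρ i = none then p else (1 - p) / 2) else 0)

/-! ## Tree tribes -/

/-- The variable index type of the complete `t`-clipped tree `W_t(r)` on `r` levels:
the first block `v_1, …, v_t`, plus, for each `k < t`, a fresh copy of the variables
of `W_t(r-1)` hanging off the 1-edge of `v_{k+1}`. -/
def XiVars (t : ℕ) : ℕ → Type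
  | 0 => Empty
  | r + 1 => Fin t ⊕ (Fin t × XiVars t r)

instance XiVars.instFintype (t : ℕ) : ∀ r, Fintype (XiVars t r)
  | 0 => inferInstanceAs (Fintype Empty)
  | r + 1 =>
      letI := XiVars.instFintype t r
      inferInstanceAs (Fintype (Fin t ⊕ (Fin t × XiVars t r)))

instance XiVars.instDecidableEq (t : ℕ) : ∀ r, DecidableEq (XiVars t r)
  | 0 => inferInstanceAs (DecidableEq Empty)
  | r + 1 =>
      letI := XiVars.instDecidableEq t r
      inferInstanceAs (DecidableEq (Fin t ⊕ (Fin t × XiVars t r)))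

/-- The `t`-clipped xor tree tribe `Ξ_t(r)`: the function computed by `W_t(r)` with
each leaf labelled by the parity of the edge labels on its root-to-leaf path.
Following the 0-edges `v_1 → v_2 → ⋯` until the first variable with value 1 (if any),
whose 1-edge leads to a fresh copy computing the negation of `Ξ_t(r-1)`. -/
def Xi (t : ℕ) : ∀ r, (XiVars t r → Bool) → Bool
  | 0, _ => false
  | r + 1, x =>
      match (List.finRange t).find? (fun i => x (Sum.inl i)) with
      | none => false
      | some k => ! Xi t r (fun v => x (Sum.inr (k, v)))

namespace XiVars

/-- The list of 1-branch positions (0-indexed within each block) taken on the path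
from the root to the block containing the given variable. -/
def branches {t : ℕ} : ∀ {r : ℕ}, XiVars t r → List (Fin t)
  | 0, v => nomatch v
  | _ + 1, Sum.inl _ => []
  | _ + 1, Sum.inr (k, w) => k :: branches w

/-- The (0-indexed) position of the variable within its block. -/
def pos {t : ℕ} : ∀ {r : ℕ}, XiVars t r → Fin t
  | 0, v => nomatch v
  | _ + 1, Sum.inl i => i
  | _ + 1, Sum.inr (_, w) => pos w

/-- The level of a variable: the recursive step at which it was added (level 1 is the
outermost block). -/
def level {t r : ℕ} (v : XiVars t r) : ℕ := (branches v).length + 1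

/-- The distance (number of edges) from the root of `W_t(r)` to the vertex of `v`. -/
def rootDist {t r : ℕ} (v : XiVars t r) : ℕ :=
  ((branches v).map (fun b => (b : ℕ) + 1)).sum + (pos v : ℕ)

/-- The distance from the vertex of `v` to the closest leaf of `W_t(r)`. -/
def leafDist {t r : ℕ} (v : XiVars t r) : ℕ :=
  min (t - (pos v : ℕ)) (1 + min t (r - level v))

/-- A root-to-leaf path of `W_t(r)` is determined by the list `L` of 1-branch positions
it takes (with `L.length ≤ r`); `v.onPath L` says the vertex of `v` lies on that path. -/
def onPath {t r : ℕ} (v : XiVars t r) (L : List (Fin t)) : Prop :=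
  branches v = L ∨
    (branches v <+: L ∧ branches v ≠ L ∧
      ∃ b : Fin t, L[(branches v).length]? = some b ∧ pos v ≤ b)

end XiVars

/-- For `t = 1`, `Ξ_1(n)` is computed by a path on `n` variables: vertex `x_i` has a
0-edge to a leaf and a 1-edge to `x_{i+1}`, leaves labelled by the parity of the edge
labels from the root. -/
def Xi1 : ∀ n, (Fin n → Bool) → Bool
  | 0, _ => false
  | n + 1, x => if x 0 then ! Xi1 n (fun i => x i.succ) else false

/-! ## Fourier coefficients -/

/-- The Fourier coefficient `f̂_S` of a boolean function, viewed as a function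
`{−1,1}^n → {−1,1}` via the identification `false ↔ +1`, `true ↔ −1`:
`f̂_S = E_x[f(x) ∏_{i ∈ S} x_i]` over a uniformly random input. -/
noncomputable def fourierCoeffB {ι : Type} [Fintype ι] [DecidableEq ι]
    (f : (ι → Bool) → Bool) (S : Finset ι) : ℝ :=
  (∑ x : ι → Bool,
      (if f x then (-1 : ℝ) else 1) * ∏ i ∈ S, (if x i then (-1 : ℝ) else 1)) /
    2 ^ Fintype.card ι

/-- The `i`-th Jacobsthal number `J_i = (2^i − (−1)^i)/3`, as a real number. -/
noncomputable def jacobsthal (i : ℕ) : ℝ := (2 ^ i - (-1) ^ i) / 3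

/-- The parity (mod-2 sum) of all the bits of `x`. -/
def parityBool {ι : Type} [Fintype ι] [DecidableEq ι] (x : ι → Bool) : Bool :=
  decide ((Finset.univ.filter fun i => x i = true).card % 2 = 1)

/-! ## The probabilities `P_0(r)`, `P_1(r)` and `γ_d(r)` -/

/-- `P_0(r)`: the probability that `Ξ_t(r)` restricted by a random `p`-restriction is
the identically-`0` function. -/
noncomputable def Pzero (t : ℕ) (p : ℝ) (r : ℕ) : ℝ :=
  restrProb p (fun ρ : XiVars t r → Option Bool => ∀ x, restrictFun (Xi t r) ρ x = false)

/-- `P_1(r)`: the probability that `Ξ_t(r)` restricted by a random `p`-restriction is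
the identically-`1` function. -/
noncomputable def Pone (t : ℕ) (p : ℝ) (r : ℕ) : ℝ :=
  restrProb p (fun ρ : XiVars t r → Option Bool => ∀ x, restrictFun (Xi t r) ρ x = true)

/-- `γ_d(r) = Pr_ρ[DT_depth(Ξ_t(r)|_ρ) ≥ d]` for a random `p`-restriction `ρ`. -/
noncomputable def gammaDT (t : ℕ) (p : ℝ) (d r : ℕ) : ℝ :=
  restrProb p (fun ρ : XiVars t r → Option Bool => d ≤ DTdepth (restrictFun (Xi t r) ρ))

/-! ## The polynomial sequences `P_0(r), P_1(r) ∈ ℝ[p]` -/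

/-- The polynomial `q = (1 − p)/2 ∈ ℝ[p]`. -/
noncomputable def qP : Polynomial ℝ := Polynomial.C (1 / 2) * (1 - Polynomial.X)

/-- The pair of polynomials `(P_0(r), P_1(r)) ∈ ℝ[p] × ℝ[p]`, defined by
`P_0(1) = q^t`, `P_1(1) = 1 − (1−q)^t`, and for `r ≥ 2`, with `U = P_1(r−1)` and
`V = P_0(r−1)`: `P_0(r) = q·U·∑_{k=0}^{t−1}(q+pU)^k + (q+pU)^t` and
`P_1(r) = q·V·∑_{k=0}^{t−1}(q+pV)^k`.  (The value at `r = 0` is junk.) -/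
noncomputable def PP (t : ℕ) : ℕ → Polynomial ℝ × Polynomial ℝ
  | 0 => (1, 0)
  | 1 => (qP ^ t, 1 - (1 - qP) ^ t)
  | r + 2 =>
      (qP * (PP t (r + 1)).2 *
          (∑ k ∈ Finset.range t, (qP + Polynomial.X * (PP t (r + 1)).2) ^ k) +
        (qP + Polynomial.X * (PP t (r + 1)).2) ^ t,
       qP * (PP t (r + 1)).1 *
          (∑ k ∈ Finset.range t, (qP + Polynomial.X * (PP t (r + 1)).1) ^ k))

/-- The polynomial `P_0(r) ∈ ℝ[p]`. -/
noncomputable def P0poly (t r : ℕ) : Polynomial ℝ := (PP t r).1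

/-- The polynomial `P_1(r) ∈ ℝ[p]`. -/
noncomputable def P1poly (t r : ℕ) : Polynomial ℝ := (PP t r).2

/-!
Condition on the variable `i` at the root of the tree. With probability `p` it stays free, and
`T|ρ` has depth `> e` only if one of the restricted subtrees has depth `≥ e` (union bound); with
probability `(1 - p)/2` each it is fixed and we pass to one subtree. Inducting over the tree with
the stronger bound `Pr[depth (T|ρ) > e] ≤ A_m · p · (4p2^t)^e`, where `m` is the distance from the
root to the nearest leaf, closes this recursion: clippedness keeps `m ≤ t` in every subtree, and
`A_m ≤ 2^(t+1)`.
-/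

section WeightedSum

variable {ι α : Type*} [Fintype ι] [DecidableEq ι] [Fintype α]

theorem sum_prod_mul_eq_sum_mul_sum_update {w : α → ℝ} (hw : ∑ a, w a = 1) (i : ι)
    (F : (ι → α) → ℝ) :
    ∑ ρ, (∏ j, w (ρ j)) * F ρ = ∑ a, w a * ∑ ρ, (∏ j, w (ρ j)) * F (Function.update ρ i a) := by
  have hweight : ∀ (ρ : ι → α) (a : α),
      w (ρ i) * ∏ j, w (Function.update ρ i a j) = w a * ∏ j, w (ρ j) := by
    intro ρ a
    have hne : ∀ j : {j // j ≠ i}, Function.update ρ i a j = ρ j :=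
      fun j => Function.update_of_ne j.2 _ _
    rw [Fintype.prod_eq_mul_prod_subtype_ne _ i, Fintype.prod_eq_mul_prod_subtype_ne _ i,
      Function.update_self]
    simp only [hne]
    ring
  let swap : Equiv.Perm ((ι → α) × α) :=
    Function.Involutive.toPerm (fun x => (Function.update x.1 i x.2, x.1 i))
      (fun x => by simp)
  calc ∑ ρ, (∏ j, w (ρ j)) * F ρ
      = ∑ x : (ι → α) × α, w x.2 * ((∏ j, w (x.1 j)) * F x.1) := by
        simp only [Fintype.sum_prod_type, ← Finset.sum_mul, hw, one_mul]
    _ = ∑ x : (ι → α) × α, w (swap x).2 * ((∏ j, w ((swap x).1 j)) * F (swap x).1) :=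
        (Equiv.sum_comp swap _).symm
    _ = ∑ ρ, ∑ a, w a * ((∏ j, w (ρ j)) * F (Function.update ρ i a)) := by
        rw [Fintype.sum_prod_type]
        refine Finset.sum_congr rfl fun ρ _ => Finset.sum_congr rfl fun a _ => ?_
        rw [← mul_assoc, ← mul_assoc, ← hweight ρ a]
        rfl
    _ = ∑ a, w a * ∑ ρ, (∏ j, w (ρ j)) * F (Function.update ρ i a) := by
        rw [Finset.sum_comm]
        simp only [Finset.mul_sum]

end WeightedSum

section RestrictionProbability

variable {ι : Type} [Fintype ι] [DecidableEq ι] {p : ℝ}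

noncomputable def restrWeight (p : ℝ) (c : Option Bool) : ℝ := if c = none then p else (1 - p) / 2

theorem restrWeight_nonneg (hp0 : 0 ≤ p) (hp1 : p ≤ 1) (c : Option Bool) :
    0 ≤ restrWeight p c := by
  unfold restrWeight
  split_ifs <;> linarith

theorem sum_restrWeight (p : ℝ) : ∑ c, restrWeight p c = 1 := by
  simp only [Fintype.sum_option, Fintype.sum_bool, restrWeight, Option.some_ne_none, if_true,
    if_false]
  ring

open Classical in
theorem restrProb_eq_sum_mul (p : ℝ) (E : (ι → Option Bool) → Prop) :
    restrProb p E = ∑ ρ, (∏ i, restrWeight p (ρ i)) * if E ρ then 1 else 0 := by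
  simp only [mul_boole]
  rfl

theorem restrProb_mono (hp0 : 0 ≤ p) (hp1 : p ≤ 1) {E E' : (ι → Option Bool) → Prop}
    (h : ∀ ρ, E ρ → E' ρ) : restrProb p E ≤ restrProb p E' := by
  simp only [restrProb_eq_sum_mul]
  refine Finset.sum_le_sum fun ρ _ => mul_le_mul_of_nonneg_left ?_
    (Finset.prod_nonneg fun i _ => restrWeight_nonneg hp0 hp1 _)
  by_cases hE : E ρ <;> by_cases hE' : E' ρ <;> simp_all

theorem restrProb_or_le (hp0 : 0 ≤ p) (hp1 : p ≤ 1) (E E' : (ι → Option Bool) → Prop) :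
    restrProb p (fun ρ => E ρ ∨ E' ρ) ≤ restrProb p E + restrProb p E' := by
  simp only [restrProb_eq_sum_mul, ← Finset.sum_add_distrib, ← mul_add]
  refine Finset.sum_le_sum fun ρ _ => mul_le_mul_of_nonneg_left ?_
    (Finset.prod_nonneg fun i _ => restrWeight_nonneg hp0 hp1 _)
  by_cases hE : E ρ <;> by_cases hE' : E' ρ <;> simp [hE, hE']

theorem restrProb_le_one (hp0 : 0 ≤ p) (hp1 : p ≤ 1) (E : (ι → Option Bool) → Prop) :
    restrProb p E ≤ 1 := by
  calc restrProb p E ≤ restrProb p (fun _ => True) := restrProb_mono hp0 hp1 fun _ _ => trivial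
    _ = ∏ _ : ι, ∑ c, restrWeight p c := by
        simp only [restrProb_eq_sum_mul, if_true, mul_one, Fintype.prod_sum]
    _ = 1 := by rw [sum_restrWeight, Finset.prod_const_one]

theorem restrProb_eq_sum_update (p : ℝ) (i : ι) (E : (ι → Option Bool) → Prop) :
    restrProb p E =
      ∑ c, restrWeight p c * restrProb p (fun ρ => E (Function.update ρ i c)) := by
  simp only [restrProb_eq_sum_mul]
  exact sum_prod_mul_eq_sum_mul_sum_update (sum_restrWeight p) i _

theorem restrProb_le_or_le_le_pow (hp0 : 0 ≤ p) (hp1 : p ≤ 1)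
    {t : ℕ} {D₀ D₁ : (ι → Option Bool) → ℕ} {a₀ a₁ : ℝ}
    (ha₀ : a₀ ≤ 2 ^ (t + 1)) (ha₁ : a₁ ≤ 2 ^ (t + 1))
    (h₀ : ∀ e, restrProb p (fun ρ => e + 1 ≤ D₀ ρ) ≤ a₀ * p * (4 * p * 2 ^ t) ^ e)
    (h₁ : ∀ e, restrProb p (fun ρ => e + 1 ≤ D₁ ρ) ≤ a₁ * p * (4 * p * 2 ^ t) ^ e) (e : ℕ) :
    restrProb p (fun ρ => e ≤ D₀ ρ ∨ e ≤ D₁ ρ) ≤ (4 * p * 2 ^ t) ^ e := by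
  cases e with
  | zero => simpa using restrProb_le_one hp0 hp1 _
  | succ e =>
    calc restrProb p (fun ρ => e + 1 ≤ D₀ ρ ∨ e + 1 ≤ D₁ ρ)
        ≤ a₀ * p * (4 * p * 2 ^ t) ^ e + a₁ * p * (4 * p * 2 ^ t) ^ e :=
          (restrProb_or_le hp0 hp1 _ _).trans (add_le_add (h₀ e) (h₁ e))
      _ = (a₀ + a₁) * (p * (4 * p * 2 ^ t) ^ e) := by ring
      _ ≤ (2 ^ (t + 1) + 2 ^ (t + 1)) * (p * (4 * p * 2 ^ t) ^ e) := by gcongr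
      _ = (4 * p * 2 ^ t) ^ (e + 1) := by ring

end RestrictionProbability

namespace DTree

variable {ι : Type}

def restrict : DTree ι → (ι → Option Bool) → DTree ι
  | leaf b, _ => leaf b
  | node i t0 t1, ρ =>
      match ρ i with
      | none => node i (t0.restrict ρ) (t1.restrict ρ)
      | some false => t0.restrict ρ
      | some true => t1.restrict ρ

theorem eval_restrict (T : DTree ι) (ρ : ι → Option Bool) (x : ι → Bool) :
    (T.restrict ρ).eval x = T.eval (fun j => (ρ j).getD (x j)) := by
  induction T with
  | leaf b => rfl
  | node i t0 t1 ih0 ih1 =>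
    rcases hρ : ρ i with _ | _ | _ <;> simp [restrict, eval, hρ, ih0, ih1]

theorem Computes.restrict {T : DTree ι} {f : (ι → Bool) → Bool} (h : T.Computes f)
    (ρ : ι → Option Bool) : (T.restrict ρ).Computes (restrictFun f ρ) :=
  fun x => by rw [eval_restrict]; exact h _

theorem ReadOnceFrom.mono {T : DTree ι} {s s' : List ι} (hs : s ⊆ s')
    (h : T.ReadOnceFrom s') : T.ReadOnceFrom s := by
  induction T generalizing s s' with
  | leaf b => trivial
  | node i t0 t1 ih0 ih1 =>
    obtain ⟨hi, h0, h1⟩ := h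
    exact ⟨fun hmem => hi (hs hmem), ih0 (List.cons_subset_cons i hs) h0,
      ih1 (List.cons_subset_cons i hs) h1⟩

theorem ReadOnceFrom.restrict {T : DTree ι} {s : List ι} (h : T.ReadOnceFrom s)
    (ρ : ι → Option Bool) : (T.restrict ρ).ReadOnceFrom s := by
  induction T generalizing s with
  | leaf b => trivial
  | node i t0 t1 ih0 ih1 =>
    obtain ⟨hi, h0, h1⟩ := h
    have hsub : s ⊆ i :: s := List.subset_cons_self i s
    rcases hρ : ρ i with _ | _ | _ <;> simp only [DTree.restrict, hρ]
    · exact ⟨hi, ih0 h0, ih1 h1⟩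
    · exact ih0 (h0.mono hsub)
    · exact ih1 (h1.mono hsub)

theorem ReadOnceFrom.notMem_nodeVars {T : DTree ι} {s : List ι} (h : T.ReadOnceFrom s)
    {j : ι} (hj : j ∈ s) : j ∉ T.nodeVars := by
  induction T generalizing s with
  | leaf b => simp [nodeVars]
  | node i t0 t1 ih0 ih1 =>
    obtain ⟨hi, h0, h1⟩ := h
    simp only [nodeVars, List.mem_cons, List.mem_append, not_or]
    exact ⟨fun hji => hi (hji ▸ hj), ih0 h0 (List.mem_cons_of_mem _ hj),
      ih1 h1 (List.mem_cons_of_mem _ hj)⟩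

theorem restrict_update_of_notMem [DecidableEq ι] {T : DTree ι} {i : ι} (hi : i ∉ T.nodeVars)
    (ρ : ι → Option Bool) (c : Option Bool) :
    T.restrict (Function.update ρ i c) = T.restrict ρ := by
  induction T with
  | leaf b => rfl
  | node j t0 t1 ih0 ih1 =>
    simp only [nodeVars, List.mem_cons, List.mem_append, not_or] at hi
    obtain ⟨hij, hi0, hi1⟩ := hi
    simp only [DTree.restrict, Function.update_of_ne (Ne.symm hij), ih0 hi0, ih1 hi1]

theorem minLeafDepth_le_of_clipped {t : ℕ} {T : DTree ι} (h : T.Clipped t) :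
    T.minLeafDepth ≤ t := by
  cases T with
  | leaf b => exact Nat.zero_le t
  | node i t0 t1 => exact h.1

end DTree

theorem DTdepth_le {ι : Type} {f : (ι → Bool) → Bool} {T : DTree ι}
    (hT : T.ReadOnce) (hf : T.Computes f) : DTdepth f ≤ T.depth :=
  Nat.sInf_le ⟨T, hT, hf, le_rfl⟩

/-- `A_m = 2^(t+1) (1 - 2^(-m))` solves `A_0 = 0`, `A_(m+1) = 1 + (A_m + A_t) / 2`, the
recursion produced by conditioning on the root of a `t`-clipped tree. -/
noncomputable def clippedCoeff (t m : ℕ) : ℝ := 2 ^ (t + 1) - 2 ^ (t + 1) / 2 ^ m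

theorem clippedCoeff_nonneg (t m : ℕ) : 0 ≤ clippedCoeff t m := by
  have : (2 : ℝ) ^ (t + 1) / 2 ^ m ≤ 2 ^ (t + 1) :=
    div_le_self (by positivity) (one_le_pow₀ one_le_two)
  unfold clippedCoeff
  linarith

theorem clippedCoeff_le (t m : ℕ) : clippedCoeff t m ≤ 2 ^ (t + 1) := by
  have : (0 : ℝ) ≤ 2 ^ (t + 1) / 2 ^ m := by positivity
  unfold clippedCoeff
  linarith

theorem clippedCoeff_mono (t : ℕ) {m m' : ℕ} (h : m ≤ m') :
    clippedCoeff t m ≤ clippedCoeff t m' := by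
  have : (2 : ℝ) ^ (t + 1) / 2 ^ m' ≤ 2 ^ (t + 1) / 2 ^ m := by gcongr; exact one_le_two
  unfold clippedCoeff
  linarith

theorem clippedCoeff_succ (t m : ℕ) :
    clippedCoeff t (m + 1) = 1 + (clippedCoeff t m + clippedCoeff t t) / 2 := by
  unfold clippedCoeff
  field_simp
  ring

theorem clippedCoeff_add_le {t m₀ m₁ : ℕ} (h₀ : m₀ ≤ t) (h₁ : m₁ ≤ t) :
    clippedCoeff t m₀ + clippedCoeff t m₁ ≤ clippedCoeff t (min m₀ m₁) + clippedCoeff t t := by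
  rcases le_total m₀ m₁ with h | h
  · rw [min_eq_left h]
    linarith [clippedCoeff_mono t h₁]
  · rw [min_eq_right h]
    linarith [clippedCoeff_mono t h₀]

namespace DTree

variable {ι : Type} [Fintype ι] [DecidableEq ι]

theorem restrProb_succ_le_depth_node (p : ℝ) {i : ι} {t₀ t₁ : DTree ι}
    (h₀ : i ∉ t₀.nodeVars) (h₁ : i ∉ t₁.nodeVars) (e : ℕ) :
    restrProb p (fun ρ => e + 1 ≤ ((node i t₀ t₁).restrict ρ).depth) =
      p * restrProb p (fun ρ => e ≤ (t₀.restrict ρ).depth ∨ e ≤ (t₁.restrict ρ).depth) +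
        (1 - p) / 2 * restrProb p (fun ρ => e + 1 ≤ (t₀.restrict ρ).depth) +
        (1 - p) / 2 * restrProb p (fun ρ => e + 1 ≤ (t₁.restrict ρ).depth) := by
  rw [restrProb_eq_sum_update p i, Fintype.sum_option, Fintype.sum_bool]
  simp only [restrict, Function.update_self, restrict_update_of_notMem h₀,
    restrict_update_of_notMem h₁, depth, Nat.add_le_add_iff_right, le_max_iff, restrWeight,
    Option.some_ne_none, if_true, if_false]
  ring

variable {t : ℕ} {p : ℝ}

theorem restrProb_succ_le_depth_restrict (hp0 : 0 ≤ p) (hp1 : p ≤ 1) {T : DTree ι}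
    (hcl : T.Clipped t) (hro : T.ReadOnce) (e : ℕ) :
    restrProb p (fun ρ => e + 1 ≤ (T.restrict ρ).depth) ≤
      clippedCoeff t T.minLeafDepth * p * (4 * p * 2 ^ t) ^ e := by
  induction T generalizing e with
  | leaf b =>
    have hempty : restrProb p (fun ρ => e + 1 ≤ ((leaf b : DTree ι).restrict ρ).depth) = 0 := by
      simp [restrict, depth, restrProb]
    rw [hempty]
    exact mul_nonneg (mul_nonneg (clippedCoeff_nonneg t 0) hp0) (by positivity)
  | node i t₀ t₁ ih₀ ih₁ =>
    obtain ⟨-, hcl₀, hcl₁⟩ := hcl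
    obtain ⟨-, hro₀, hro₁⟩ := hro
    have hm₀ := minLeafDepth_le_of_clipped hcl₀
    have hm₁ := minLeafDepth_le_of_clipped hcl₁
    have B₀ := ih₀ hcl₀ (hro₀.mono (List.nil_subset _))
    have B₁ := ih₁ hcl₁ (hro₁.mono (List.nil_subset _))
    have hstar := restrProb_le_or_le_le_pow hp0 hp1 (clippedCoeff_le t _) (clippedCoeff_le t _)
      B₀ B₁ e
    set A₀ := clippedCoeff t t₀.minLeafDepth
    set A₁ := clippedCoeff t t₁.minLeafDepth
    set K := (4 * p * 2 ^ t) ^ e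
    have hq : 0 ≤ (1 - p) / 2 := by linarith
    rw [restrProb_succ_le_depth_node p (hro₀.notMem_nodeVars List.mem_cons_self)
      (hro₁.notMem_nodeVars List.mem_cons_self)]
    calc _ ≤ p * K + (1 - p) / 2 * (A₀ * p * K) + (1 - p) / 2 * (A₁ * p * K) :=
          add_le_add (add_le_add (mul_le_mul_of_nonneg_left hstar hp0)
            (mul_le_mul_of_nonneg_left (B₀ e) hq)) (mul_le_mul_of_nonneg_left (B₁ e) hq)
      _ = p * K * (1 + (1 - p) / 2 * (A₀ + A₁)) := by ring
      _ ≤ p * K * (1 + (clippedCoeff t (min t₀.minLeafDepth t₁.minLeafDepth)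
            + clippedCoeff t t) / 2) := by
          have hA := clippedCoeff_add_le hm₀ hm₁
          have : 0 ≤ A₀ + A₁ := add_nonneg (clippedCoeff_nonneg _ _) (clippedCoeff_nonneg _ _)
          gcongr
          nlinarith
      _ = _ := by rw [minLeafDepth, clippedCoeff_succ]; ring

theorem restrProb_le_depth_restrict_le (hp0 : 0 ≤ p) (hp1 : p ≤ 1) {T : DTree ι}
    (hcl : T.Clipped t) (hro : T.ReadOnce) (d : ℕ) :
    restrProb p (fun ρ => d ≤ (T.restrict ρ).depth) ≤ (4 * p * 2 ^ t) ^ d := by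
  simpa only [le_refl, or_self] using restrProb_le_or_le_le_pow hp0 hp1
    (clippedCoeff_le t _) (clippedCoeff_le t _)
    (restrProb_succ_le_depth_restrict hp0 hp1 hcl hro)
    (restrProb_succ_le_depth_restrict hp0 hp1 hcl hro) d

end DTree

theorem clipped_switching_upper_bound_general (n t : ℕ)
    (f : (Fin n → Bool) → Bool)
    (hf : ∃ T : DTree (Fin n), T.ReadOnce ∧ T.Computes f ∧ T.Clipped t)
    (p : ℝ) (hp0 : 0 ≤ p) (hp1 : p ≤ 1) (d : ℕ) :
    restrProb p (fun ρ : Fin n → Option Bool => d ≤ DTdepth (restrictFun f ρ)) ≤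
      (4 * p * 2 ^ t) ^ d := by
  obtain ⟨T, hro, hcomp, hcl⟩ := hf
  calc restrProb p (fun ρ : Fin n → Option Bool => d ≤ DTdepth (restrictFun f ρ))
      ≤ restrProb p (fun ρ => d ≤ (T.restrict ρ).depth) :=
        restrProb_mono hp0 hp1 fun ρ h => h.trans (DTdepth_le (hro.restrict ρ) (hcomp.restrict ρ))
    _ ≤ (4 * p * 2 ^ t) ^ d := T.restrProb_le_depth_restrict_le hp0 hp1 hcl hro d

/-- switching lemma upper bound for `t`-clipped decision trees:
if `f` is computed by some `t`-clipped decision tree (`t ≥ 1`), then for a random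
`p`-restriction `ρ`, `Pr_ρ[DT_depth(f|_ρ) ≥ d] ≤ (4·p·2^t)^d`. -/
theorem clipped_switching_upper_bound (n t : ℕ) (ht : 1 ≤ t)
    (f : (Fin n → Bool) → Bool)
    (hf : ∃ T : DTree (Fin n), T.ReadOnce ∧ T.Computes f ∧ T.Clipped t)
    (p : ℝ) (hp0 : 0 ≤ p) (hp1 : p ≤ 1) (d : ℕ) :
    restrProb p (fun ρ : Fin n → Option Bool => d ≤ DTdepth (restrictFun f ρ)) ≤
      (4 * p * 2 ^ t) ^ d :=
  clipped_switching_upper_bound_general n t f hf p hp0 hp1 d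
end

section
/- For every integer t ≥ 1 and every real p with 0 ≤ p ≤ 1, setting q = (1−p)/2 and μ = 4·2^t, the following inequality holds: (∑_{j=1}^{t} ∑_{i=0}^{t−j} μ^{−j} · C(j+i, i) · q^i) · (1 − q) ≤ 1 − 2q + q^{t+1}, where C(j+i,i) denotes the binomial coefficient. (Equivalently, since 1 − 2q + q^{t+1} > 0 for p ∈ [0,1], the quotient (∑_{j=1}^{t} ∑_{i=0}^{t−j} μ^{−j} C(j+i,i) q^i)·(1−q)/(1−2q+q^{t+1}) is at most 1.) -/
/-!
Write `A = μ⁻¹`. Since `∑_{i ≥ 0} C(j+i,i) qⁱ = (1-q)^{-(j+1)}`, each term `j ≥ 2` contributes at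
most `(A/(1-q))ʲ ≤ (2A)ʲ`, so together at most `8A²`. The term `j = 1` is computed exactly:
`(∑_{i<t} (i+1) qⁱ)(1-q)² = 1 - (t+1)qᵗ + t qᵗ⁺¹`. What remains is a polynomial inequality in `p`,
which follows from `qᵗ = 4A(1-p)ᵗ`, Bernoulli's `(1-p)ᵗ ≥ 1 - tp` and `4(t+1)A ≤ 1`, i.e. `t < 2ᵗ`.
-/

open Finset

theorem sum_range_add_one_mul_pow_mul_one_sub_sq {R : Type*} [CommRing R] (x : R) (n : ℕ) :
    (∑ i ∈ range n, ((i : R) + 1) * x ^ i) * (1 - x) ^ 2 =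
      1 - (n + 1) * x ^ n + n * x ^ (n + 1) := by
  induction n with
  | zero => simp
  | succ n ih =>
    rw [sum_range_succ, add_mul, ih]
    push_cast
    ring

theorem sum_range_choose_mul_pow_le_inv {q : ℝ} (hq0 : 0 ≤ q) (hq1 : q < 1) (j n : ℕ) :
    ∑ i ∈ range n, ((j + i).choose i : ℝ) * q ^ i ≤ ((1 - q) ^ (j + 1))⁻¹ := by
  have hq : ‖q‖ < 1 := by rwa [Real.norm_of_nonneg hq0]
  calc ∑ i ∈ range n, ((j + i).choose i : ℝ) * q ^ i
      = ∑ i ∈ range n, ((i + j).choose j : ℝ) * q ^ i := by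
        refine sum_congr rfl fun i _ => ?_
        rw [add_comm, Nat.choose_symm_add]
    _ ≤ ∑' i, ((i + j).choose j : ℝ) * q ^ i :=
        (summable_choose_mul_geometric_of_norm_lt_one j hq).sum_le_tsum _
          fun i _ => by positivity
    _ = ((1 - q) ^ (j + 1))⁻¹ := by
        rw [tsum_choose_mul_geometric_of_norm_lt_one j hq, one_div]

theorem pow_mul_sum_range_choose_mul_pow_mul_le {A q : ℝ} (hA : 0 ≤ A) (hq0 : 0 ≤ q)
    (hq : q ≤ 1 / 2) (j n : ℕ) :
    A ^ j * (∑ i ∈ range n, ((j + i).choose i : ℝ) * q ^ i) * (1 - q) ≤ (2 * A) ^ j := by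
  have hc : 0 < 1 - q := by linarith
  calc A ^ j * (∑ i ∈ range n, ((j + i).choose i : ℝ) * q ^ i) * (1 - q)
      ≤ A ^ j * ((1 - q) ^ (j + 1))⁻¹ * (1 - q) := by
        gcongr
        exact sum_range_choose_mul_pow_le_inv hq0 (by linarith) j n
    _ = (A / (1 - q)) ^ j := by
        rw [div_pow, pow_succ]
        field_simp
    _ ≤ (2 * A) ^ j := by
        gcongr
        rw [div_le_iff₀ hc]
        nlinarith

theorem sum_Ico_two_pow_mul_sum_range_choose_mul_pow_mul_le {A q : ℝ} (hA0 : 0 ≤ A)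
    (hA : A ≤ 1 / 4) (hq0 : 0 ≤ q) (hq : q ≤ 1 / 2) (m : ℕ) (n : ℕ → ℕ) :
    ∑ j ∈ Ico 2 m, A ^ j * (∑ i ∈ range (n j), ((j + i).choose i : ℝ) * q ^ i) * (1 - q) ≤
      8 * A ^ 2 :=
  calc _ ≤ ∑ j ∈ Ico 2 m, (2 * A) ^ j :=
        sum_le_sum fun j _ => pow_mul_sum_range_choose_mul_pow_mul_le hA0 hq0 hq j _
    _ ≤ (2 * A) ^ 2 / (1 - 2 * A) := geom_sum_Ico_le_of_lt_one (by positivity) (by linarith)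
    _ ≤ 8 * A ^ 2 := by
        rw [div_le_iff₀ (by linarith)]
        nlinarith

/-- `first_term_add_le` multiplied by `1 - q = (1 + p)/2`, with `qᵗ` written as `4A·u`. -/
theorem first_term_poly_le (T A p u : ℝ) (hT : 1 ≤ T) (hA : 0 < A) (hTA : 4 * (T + 1) * A ≤ 1)
    (hp0 : 0 ≤ p) (hp1 : p ≤ 1) (hu : 1 - T * p ≤ u) :
    A * (1 - (T + 1) * (4 * A * u) + T * ((1 - p) / 2) * (4 * A * u)) +
        8 * A ^ 2 * ((1 + p) / 2) ≤
      (p + (1 - p) / 2 * (4 * A * u)) * ((1 + p) / 2) := by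
  have hT0 : 0 ≤ T := by linarith
  have hAT : A * T ≤ 1 / 4 := by nlinarith
  have hu_coeff : 0 ≤ 4 * A * ((1 - p) / 2 * ((1 + p) / 2) + A + A * T * ((1 + p) / 2)) := by
    have : 0 ≤ 1 - p := by linarith
    positivity
  have hp_coeff : 0 ≤ (1 + p) / 2 - 4 * A ^ 2 * (1 + T) - A * p - T * A * (1 - p ^ 2)
      - 4 * (A * T) ^ 2 * ((1 + p) / 2) := by
    nlinarith [mul_nonneg hA.le hp0, mul_nonneg (mul_nonneg hA.le hT0) (sq_nonneg p),
      mul_nonneg (mul_nonneg hA.le hT0) (by linarith : (0 : ℝ) ≤ 1 / 4 - A * T)]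
  have hrest : 0 ≤ 4 * A ^ 2 * T * ((1 + p) / 2) := by positivity
  -- the difference of the two sides is `p * hp_coeff + hrest + hu_coeff * (u - (1 - T * p))`
  linarith [mul_nonneg hp0 hp_coeff, mul_nonneg hu_coeff (sub_nonneg.2 hu)]

theorem first_term_add_le (t : ℕ) (ht : 1 ≤ t) (p : ℝ) (hp0 : 0 ≤ p) (hp1 : p ≤ 1) :
    (4 * 2 ^ t : ℝ)⁻¹ * (∑ i ∈ range t, ((i : ℝ) + 1) * ((1 - p) / 2) ^ i) * (1 - (1 - p) / 2) +
        8 * ((4 * 2 ^ t : ℝ)⁻¹) ^ 2 ≤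
      1 - 2 * ((1 - p) / 2) + ((1 - p) / 2) ^ (t + 1) := by
  set A : ℝ := (4 * 2 ^ t)⁻¹
  have hA : 0 < A := by positivity
  have hc : 0 < 1 - (1 - p) / 2 := by linarith
  have hTA : 4 * ((t : ℝ) + 1) * A ≤ 1 := by
    have : ((t + 1 : ℕ) : ℝ) ≤ 2 ^ t := by exact_mod_cast Nat.lt_two_pow_self
    rw [show 4 * ((t : ℝ) + 1) * A = (t + 1) / 2 ^ t by simp only [A]; field_simp,
      div_le_one (by positivity)]
    exact_mod_cast this
  have hpow : ((1 - p) / 2) ^ t = 4 * A * (1 - p) ^ t := by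
    simp only [A, div_pow]
    field_simp
  have hbernoulli : 1 - t * p ≤ (1 - p) ^ t := by
    simpa [sub_eq_add_neg] using one_add_mul_le_pow (by linarith : (-2 : ℝ) ≤ -p) t
  have key := first_term_poly_le t A p ((1 - p) ^ t) (by exact_mod_cast ht) hA hTA hp0 hp1
    hbernoulli
  rw [← hpow] at key
  refine le_of_mul_le_mul_right ?_ hc
  calc _ = A * ((∑ i ∈ range t, ((i : ℝ) + 1) * ((1 - p) / 2) ^ i) * (1 - (1 - p) / 2) ^ 2) +
        8 * A ^ 2 * (1 - (1 - p) / 2) := by ring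
    _ ≤ _ := by
        rw [sum_range_add_one_mul_pow_mul_one_sub_sq]
        linear_combination key

/-- for `t ≥ 1`, `0 ≤ p ≤ 1`, `q = (1−p)/2` and `μ = 4·2^t`:
`(∑_{j=1}^{t} ∑_{i=0}^{t−j} μ^{−j}·C(j+i,i)·q^i)·(1−q) ≤ 1 − 2q + q^{t+1}`. -/
theorem key_coefficient_inequality (t : ℕ) (ht : 1 ≤ t)
    (p : ℝ) (hp0 : 0 ≤ p) (hp1 : p ≤ 1) :
    (∑ j ∈ Finset.Icc 1 t, ∑ i ∈ Finset.range (t - j + 1),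
        ((4 * 2 ^ t : ℝ))⁻¹ ^ j * ((j + i).choose i : ℝ) * ((1 - p) / 2) ^ i) *
        (1 - (1 - p) / 2) ≤
      1 - 2 * ((1 - p) / 2) + ((1 - p) / 2) ^ (t + 1) := by
  have hfirst := first_term_add_le t ht p hp0 hp1
  have hq0 : 0 ≤ (1 - p) / 2 := by linarith
  have hq : (1 - p) / 2 ≤ 1 / 2 := by linarith
  set A : ℝ := (4 * 2 ^ t)⁻¹
  set q : ℝ := (1 - p) / 2
  have hA : A ≤ 1 / 4 := by
    have : (1 : ℝ) ≤ 2 ^ t := one_le_pow₀ (by norm_num)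
    calc A ≤ (4 : ℝ)⁻¹ := inv_anti₀ (by norm_num) (by linarith)
      _ = 1 / 4 := by norm_num
  have htail := sum_Ico_two_pow_mul_sum_range_choose_mul_pow_mul_le (by positivity) hA hq0 hq
    (t + 1) (fun j => t - j + 1)
  have hj1 : ∑ i ∈ range (t - 1 + 1), ((1 + i).choose i : ℝ) * q ^ i =
      ∑ i ∈ range t, ((i : ℝ) + 1) * q ^ i := by
    rw [Nat.sub_add_cancel ht]
    refine sum_congr rfl fun i _ => ?_
    rw [add_comm 1 i, Nat.choose_succ_self_right]
    push_cast
    rfl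
  calc _ = ∑ j ∈ Ico 1 (t + 1),
        A ^ j * (∑ i ∈ range (t - j + 1), ((j + i).choose i : ℝ) * q ^ i) * (1 - q) := by
        rw [sum_mul, Ico_add_one_right_eq_Icc]
        refine sum_congr rfl fun j _ => ?_
        rw [mul_sum]
        simp only [mul_assoc]
    _ ≤ _ := by
        rw [sum_eq_sum_Ico_succ_bot (by omega), pow_one, hj1]
        linarith
end

section
/- Let n ≥ 1 be an odd integer and let f = Ξ_1(n) be the 1-clipped xor tree tribe on variables x_1,…,x_n (ordered naturally with x_1 at the root), viewed as a function {−1,1}^n → {−1,1} by identifying the boolean value 0 with 1 and the boolean value 1 with −1 for both inputs and outputs. Then for every nonempty subset S ⊆ {1,…,n}, with j the largest index appearing in S, the Fourier coefficient of f at S equals f̂_S = (−1)^{|S|+j} · J_{n−j+1} / 2^{n−1}, where J_i = (2^i − (−1)^i)/3 is the i-th Jacobsthal number. -/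
namespace Aux

noncomputable def sgn (b : Bool) : ℝ := if b then -1 else 1

@[simp] lemma sgn_false : sgn false = 1 := rfl
@[simp] lemma sgn_true : sgn true = -1 := rfl
@[simp] lemma sgn_not (b : Bool) : sgn (!b) = - sgn b := by cases b <;> simp [sgn]

lemma sum_cons (n : ℕ) (g : (Fin (n+1) → Bool) → ℝ) :
    ∑ x : Fin (n+1) → Bool, g x
      = ∑ y : Fin n → Bool, (g (Fin.cons false y) + g (Fin.cons true y)) := by
  rw [← (Fin.consEquiv (fun _ => Bool)).sum_comp g]
  rw [Fintype.sum_prod_type_right]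
  simp only [Fin.consEquiv, Equiv.coe_fn_mk]
  exact Finset.sum_congr rfl fun y _ => by rw [Fintype.sum_bool]; ring

lemma char_sum_zero (n : ℕ) (S : Finset (Fin n)) (hS : S.Nonempty) :
    ∑ y : Fin n → Bool, ∏ i ∈ S, sgn (y i) = 0 := by
  obtain ⟨j, hj⟩ := hS
  have hinv : Function.Involutive (fun y : Fin n → Bool => Function.update y j (!(y j))) := by
    intro y
    funext i
    by_cases h : i = j <;> simp [Function.update, h]
  have key : ∀ y : Fin n → Bool,
      ∏ i ∈ S, sgn (Function.update y j (!(y j)) i) = - ∏ i ∈ S, sgn (y i) := by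
    intro y
    have h1 : ∀ i ∈ S, sgn (Function.update y j (!(y j)) i)
        = Function.update (fun i => sgn (y i)) j (- sgn (y j)) i := by
      intro i _
      by_cases h : i = j <;> simp [Function.update, h]
    rw [Finset.prod_congr rfl h1, Finset.prod_update_of_mem hj,
      ← Finset.mul_prod_erase S (fun i => sgn (y i)) hj, Finset.sdiff_singleton_eq_erase]
    ring
  have hc := Equiv.sum_comp (hinv.toPerm _) (fun y => ∏ i ∈ S, sgn (y i))
  simp only [Function.Involutive.coe_toPerm] at hc
  have h2 : ∑ y : Fin n → Bool, ∏ i ∈ S, sgn (y i)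
      = - ∑ y : Fin n → Bool, ∏ i ∈ S, sgn (y i) := by
    conv_lhs => rw [← hc]
    rw [← Finset.sum_neg_distrib]
    exact Finset.sum_congr rfl fun y _ => key y
  linarith

/-- Unnormalised Fourier sum. -/
noncomputable def A (n : ℕ) (S : Finset (Fin n)) : ℝ :=
  ∑ x : Fin n → Bool, sgn (Xi1 n x) * ∏ i ∈ S, sgn (x i)

noncomputable def E (n : ℕ) : ℝ := ∑ x : Fin n → Bool, sgn (Xi1 n x)

@[simp] lemma xi1_cons (n : ℕ) (b : Bool) (y : Fin n → Bool) :
    Xi1 (n+1) (Fin.cons b y) = if b then ! Xi1 n y else false := by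
  simp [Xi1]

lemma E_eq (n : ℕ) : E n = (2 ^ n + 2 * (-1) ^ n) / 3 := by
  induction n with
  | zero => simp [E, Xi1]; norm_num
  | succ n ih =>
      have : E (n+1) = 2 ^ n - E n := by
        rw [show E (n+1) = ∑ x : Fin (n+1) → Bool, sgn (Xi1 (n+1) x) from rfl, sum_cons]
        simp only [xi1_cons, if_true, if_false, sgn_false, sgn_not]
        rw [Finset.sum_add_distrib]
        simp [E, sub_eq_add_neg, Finset.sum_neg_distrib]
      rw [this, ih]
      rw [pow_succ, pow_succ]
      ring

noncomputable def tail {n : ℕ} (S : Finset (Fin (n+1))) : Finset (Fin n) :=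
  S.preimage Fin.succ (Function.Injective.injOn (Fin.succ_injective n))

lemma mem_tail {n : ℕ} (S : Finset (Fin (n+1))) (i : Fin n) :
    i ∈ tail S ↔ i.succ ∈ S := Finset.mem_preimage

lemma tail_map {n : ℕ} (S : Finset (Fin (n+1))) :
    (tail S).map ⟨Fin.succ, Fin.succ_injective n⟩ = S.erase 0 := by
  ext a
  simp only [Finset.mem_map, Function.Embedding.coeFn_mk, Finset.mem_erase]
  rcases Fin.eq_zero_or_eq_succ a with rfl | ⟨i, rfl⟩
  · simp [Fin.succ_ne_zero]
  · constructor
    · rintro ⟨b, hb, hba⟩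
      have : b = i := Fin.succ_injective n hba
      subst this
      exact ⟨Fin.succ_ne_zero _, (mem_tail S _).1 hb⟩
    · rintro ⟨-, hi⟩
      exact ⟨i, (mem_tail S i).2 hi, rfl⟩

lemma tail_card {n : ℕ} (S : Finset (Fin (n+1))) :
    (tail S).card = (S.erase 0).card := by
  rw [← tail_map S, Finset.card_map]

lemma tail_max' {n : ℕ} (S : Finset (Fin (n+1))) (hS' : (tail S).Nonempty)
    (hS : S.Nonempty) :
    ((S.max' hS : ℕ)) = ((tail S).max' hS' : ℕ) + 1 := by
  have h1 : ((tail S).max' hS').succ ∈ S := (mem_tail S _).1 (Finset.max'_mem _ hS')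
  have h2 : S.max' hS ≤ ((tail S).max' hS').succ := by
    apply Finset.max'_le
    intro a ha
    rcases Fin.eq_zero_or_eq_succ a with rfl | ⟨i, rfl⟩
    · exact Fin.zero_le _
    · have : i ≤ (tail S).max' hS' := Finset.le_max' _ i ((mem_tail S i).2 ha)
      exact Fin.succ_le_succ_iff.2 this
  have h3 : ((tail S).max' hS').succ ≤ S.max' hS := Finset.le_max' _ _ h1
  have := le_antisymm h2 h3
  rw [this, Fin.val_succ]

lemma prod_cons {n : ℕ} (S : Finset (Fin (n+1))) (b : Bool) (y : Fin n → Bool) :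
    ∏ i ∈ S, sgn (Fin.cons (α := fun _ => Bool) b y i)
      = (if (0 : Fin (n+1)) ∈ S then sgn b else 1) * ∏ i ∈ tail S, sgn (y i) := by
  have h1 : ∏ i ∈ tail S, sgn (y i) = ∏ i ∈ S.erase 0, sgn (Fin.cons (α := fun _ => Bool) b y i) := by
    rw [← tail_map S, Finset.prod_map (tail S) ⟨Fin.succ, Fin.succ_injective n⟩
      fun i => sgn (Fin.cons (α := fun _ => Bool) b y i)]
    exact Finset.prod_congr rfl fun i _ => by simp
  rw [h1]
  by_cases h : (0 : Fin (n+1)) ∈ S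
  · rw [if_pos h, ← Finset.mul_prod_erase S _ h]
    simp
  · rw [if_neg h, Finset.erase_eq_of_notMem h, one_mul]

lemma tail_empty_singleton {n : ℕ} (S : Finset (Fin (n+1))) (hS : S.Nonempty)
    (h : ¬ (tail S).Nonempty) : S = {0} := by
  have hsub : S ⊆ {0} := by
    intro a ha
    rcases Fin.eq_zero_or_eq_succ a with rfl | ⟨i, rfl⟩
    · exact Finset.mem_singleton_self 0
    · exact absurd ⟨i, (mem_tail S i).2 ha⟩ h
  rcases Finset.subset_singleton_iff.1 hsub with rfl | h
  · exact absurd hS (by simp)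
  · exact h

lemma A_succ {n : ℕ} (S : Finset (Fin (n+1))) :
    A (n+1) S = (∑ y : Fin n → Bool, ∏ i ∈ tail S, sgn (y i))
      + (if (0 : Fin (n+1)) ∈ S then 1 else -1) * A n (tail S) := by
  rw [show A (n+1) S = ∑ x : Fin (n+1) → Bool,
      sgn (Xi1 (n+1) x) * ∏ i ∈ S, sgn (x i) from rfl, sum_cons,
    Finset.sum_add_distrib]
  congr 1
  · refine Finset.sum_congr rfl fun y _ => ?_
    rw [prod_cons]
    simp
  · rw [show A n (tail S) = ∑ y : Fin n → Bool,
        sgn (Xi1 n y) * ∏ i ∈ tail S, sgn (y i) from rfl, Finset.mul_sum]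
    refine Finset.sum_congr rfl fun y _ => ?_
    rw [prod_cons]
    by_cases h0 : (0 : Fin (n+1)) ∈ S <;> simp [h0] <;> ring

lemma A_eq : ∀ (n : ℕ) (S : Finset (Fin n)) (hS : S.Nonempty),
    A n S = (-1 : ℝ) ^ (S.card + ((S.max' hS : ℕ) + 1)) * 2
      * jacobsthal (n - ((S.max' hS : ℕ) + 1) + 1) := by
  intro n
  induction n with
  | zero => intro S hS; exact (S.max' hS).elim0
  | succ n ih =>
    intro S hS
    rw [A_succ]
    by_cases h' : (tail S).Nonempty
    · have hj : ((S.max' hS : ℕ)) = ((tail S).max' h' : ℕ) + 1 := tail_max' S h' hS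
      rw [char_sum_zero n _ h', zero_add, ih _ h']
      set c' := (tail S).card
      set j' := (((tail S).max' h' : ℕ)) with hj'def
      have hjn : j' < n := by exact_mod_cast ((tail S).max' h').isLt
      by_cases h0 : (0 : Fin (n+1)) ∈ S
      · have hcard : S.card = c' + 1 := by
          rw [show c' = (tail S).card from rfl, tail_card,
            Finset.card_erase_of_mem h0]
          have h1 : 1 ≤ S.card := Finset.card_pos.2 hS
          omega
        rw [if_pos h0, hcard, hj]
        have harg : n + 1 - (j' + 1 + 1) + 1 = n - (j' + 1) + 1 := by omega
        rw [harg]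
        have hsign : (-1 : ℝ) ^ (c' + 1 + (j' + 1 + 1)) = (-1 : ℝ) ^ (c' + (j' + 1)) := by
          rw [show c' + 1 + (j' + 1 + 1) = (c' + (j' + 1)) + 2 by ring, pow_add]
          norm_num
        rw [hsign]
        ring
      · have hcard : S.card = c' := by
          rw [show c' = (tail S).card from rfl, tail_card,
            Finset.erase_eq_of_notMem h0]
        rw [if_neg h0, hcard, hj]
        have harg : n + 1 - (j' + 1 + 1) + 1 = n - (j' + 1) + 1 := by omega
        rw [harg]
        have hsign : (-1 : ℝ) ^ (c' + (j' + 1 + 1)) = -(-1 : ℝ) ^ (c' + (j' + 1)) := by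
          rw [show c' + (j' + 1 + 1) = (c' + (j' + 1)) + 1 by ring, pow_succ]
          ring
        rw [hsign]
        ring
    · have hS0 : S = {0} := tail_empty_singleton S hS h'
      subst hS0
      have ht : tail ({0} : Finset (Fin (n+1))) = ∅ := by
        ext i
        simp [mem_tail, Fin.succ_ne_zero]
      rw [ht]
      have hA : A n ∅ = E n := by
        rw [show A n ∅ = ∑ x : Fin n → Bool, sgn (Xi1 n x) * ∏ i ∈ (∅ : Finset (Fin n)), sgn (x i) from rfl]
        simp [E]
      have hsum : (∑ y : Fin n → Bool, ∏ i ∈ (∅ : Finset (Fin n)), sgn (y i)) = 2 ^ n := by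
        simp [Finset.card_univ]
      rw [hA, hsum, E_eq]
      simp only [Finset.max'_singleton, Finset.card_singleton, Fin.val_zero]
      norm_num
      rw [jacobsthal, pow_succ, pow_succ]
      ring

end Aux

/-- for odd `n ≥ 1`, the Fourier coefficients of `Ξ_1(n)` (viewed as a
`±1`-valued function via `0 ↔ +1`, `1 ↔ −1`) are, for nonempty `S` with largest
(1-indexed) index `j`, `f̂_S = (−1)^{|S|+j}·J_{n−j+1}/2^{n−1}` with `J` the Jacobsthal
numbers. -/
theorem xi1_fourier_coeff (n : ℕ) (hn : 1 ≤ n) (hodd : Odd n)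
    (S : Finset (Fin n)) (hS : S.Nonempty) :
    fourierCoeffB (Xi1 n) S =
      (-1 : ℝ) ^ (S.card + ((S.max' hS : ℕ) + 1)) *
        jacobsthal (n - ((S.max' hS : ℕ) + 1) + 1) / 2 ^ (n - 1) := by
  have h1 : fourierCoeffB (Xi1 n) S = Aux.A n S / 2 ^ Fintype.card (Fin n) := rfl
  rw [h1, Aux.A_eq n S hS, Fintype.card_fin]
  obtain ⟨m, rfl⟩ : ∃ m, n = m + 1 := ⟨n - 1, by omega⟩
  rw [show m + 1 - 1 = m by omega, pow_succ]
  ring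
end

section
/- Fix an integer t ≥ 1, define the polynomial sequences P_0(r), P_1(r) ∈ ℝ[p] as in the context, and set β = 1 − 2^{−t}. Then for every odd r ≥ 1: [1]P_0(r) = (1 − β^{r+1})/(1 + β) and [1]P_1(r) = (β + β^{r+1})/(1 + β); and for every even r ≥ 2: [1]P_0(r) = (1 + β^{r+1})/(1 + β) and [1]P_1(r) = (β − β^{r+1})/(1 + β). -/
lemma constCoeff_qP : Polynomial.constantCoeff qP = 1/2 := by
  simp [qP]

lemma geom_half (t : ℕ) : ∑ k ∈ Finset.range t, (1/2:ℝ)^k = 2 * (1 - (1/2)^t) := by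
  rw [geom_sum_eq (by norm_num)]
  ring

lemma pp_const (t : ℕ) (ht : 1 ≤ t) :
    ∀ r, 1 ≤ r →
      Polynomial.constantCoeff (PP t r).1
        = (1 - (-(1 - (1/2:ℝ)^t))^(r+1)) / (1 + (1 - (1/2:ℝ)^t)) ∧
      Polynomial.constantCoeff (PP t r).2
        = ((1 - (1/2:ℝ)^t) + (-(1 - (1/2:ℝ)^t))^(r+1)) / (1 + (1 - (1/2:ℝ)^t)) := by
  set β : ℝ := 1 - (1/2:ℝ)^t with hβ
  have hb0 : (0:ℝ) ≤ β := by
    have : (1/2:ℝ)^t ≤ 1 := pow_le_one₀ (by norm_num) (by norm_num)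
    rw [hβ]; linarith
  have hX : Polynomial.constantCoeff (Polynomial.X : Polynomial ℝ) = 0 := by simp
  have hne : (1 + β) ≠ 0 := by linarith
  intro r hr
  induction r with
  | zero => omega
  | succ r ih =>
    rcases Nat.eq_or_lt_of_le hr with h1 | h2
    · -- r + 1 = 1
      have hr0 : r = 0 := by omega
      subst hr0
      constructor
      · show Polynomial.constantCoeff (qP ^ t) = _
        rw [map_pow, constCoeff_qP]
        have : (1/2:ℝ)^t = 1 - β := by simp [hβ]
        rw [this]
        field_simp
        ring
      · show Polynomial.constantCoeff (1 - (1 - qP) ^ t) = _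
        rw [map_sub, map_pow, map_sub, map_one, constCoeff_qP]
        have h12 : (1:ℝ) - 1/2 = 1/2 := by norm_num
        rw [h12]
        have : (1/2:ℝ)^t = 1 - β := by simp [hβ]
        rw [this]
        field_simp
        ring
    · -- r ≥ 1
      have hr1 : 1 ≤ r := by omega
      obtain ⟨ha, hb⟩ := ih hr1
      obtain ⟨r', rfl⟩ : ∃ r', r = r' + 1 := ⟨r - 1, by omega⟩
      constructor
      · show Polynomial.constantCoeff (qP * (PP t (r'+1)).2 *
          (∑ k ∈ Finset.range t, (qP + Polynomial.X * (PP t (r'+1)).2) ^ k) +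
          (qP + Polynomial.X * (PP t (r'+1)).2) ^ t) = _
        rw [map_add, map_mul, map_mul, map_sum, map_pow, constCoeff_qP]
        simp only [map_add, map_mul, map_pow, constCoeff_qP, hX,
          zero_mul, add_zero]
        rw [hb, geom_half t]
        rw [show ((1:ℝ)/2)^t = 1 - β from by simp [hβ]]
        field_simp
        ring
      · show Polynomial.constantCoeff (qP * (PP t (r'+1)).1 *
          (∑ k ∈ Finset.range t, (qP + Polynomial.X * (PP t (r'+1)).1) ^ k)) = _
        rw [map_mul, map_mul, map_sum, constCoeff_qP]
        simp only [map_add, map_mul, map_pow, constCoeff_qP, hX,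
          zero_mul, add_zero]
        rw [ha, geom_half t]
        rw [show ((1:ℝ)/2)^t = 1 - β from by simp [hβ]]
        field_simp
        ring

/-- exact constant coefficients, with `β = 1 − 2^{−t}`:
for odd `r ≥ 1`, `[1]P_0(r) = (1 − β^{r+1})/(1 + β)` and
`[1]P_1(r) = (β + β^{r+1})/(1 + β)`; for even `r ≥ 2`,
`[1]P_0(r) = (1 + β^{r+1})/(1 + β)` and `[1]P_1(r) = (β − β^{r+1})/(1 + β)`. -/
theorem ppoly_const_coeff_exact (t : ℕ) (ht : 1 ≤ t) (r : ℕ) :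
    (Odd r → 1 ≤ r →
      (P0poly t r).coeff 0 =
          (1 - (1 - (1 / 2 : ℝ) ^ t) ^ (r + 1)) / (1 + (1 - (1 / 2 : ℝ) ^ t)) ∧
        (P1poly t r).coeff 0 =
          ((1 - (1 / 2 : ℝ) ^ t) + (1 - (1 / 2 : ℝ) ^ t) ^ (r + 1)) /
            (1 + (1 - (1 / 2 : ℝ) ^ t))) ∧
    (Even r → 2 ≤ r →
      (P0poly t r).coeff 0 =
          (1 + (1 - (1 / 2 : ℝ) ^ t) ^ (r + 1)) / (1 + (1 - (1 / 2 : ℝ) ^ t)) ∧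
        (P1poly t r).coeff 0 =
          ((1 - (1 / 2 : ℝ) ^ t) - (1 - (1 / 2 : ℝ) ^ t) ^ (r + 1)) /
            (1 + (1 - (1 / 2 : ℝ) ^ t))) := by

  have hcc : ∀ Q : Polynomial ℝ, Q.coeff 0 = Polynomial.constantCoeff Q := fun Q => rfl
  constructor
  · intro hodd hr
    obtain ⟨h1, h2⟩ := pp_const t ht r hr
    have he : Even (r + 1) := Odd.add_one hodd
    rw [he.neg_pow] at h1 h2
    exact ⟨by rw [hcc]; exact h1, by rw [hcc]; exact h2⟩
  · intro heven hr
    obtain ⟨h1, h2⟩ := pp_const t ht r (by omega)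
    have ho : Odd (r + 1) := Even.add_one heven
    rw [ho.neg_pow] at h1 h2
    constructor
    · show Polynomial.constantCoeff (PP t r).1 = _
      rw [h1]; ring
    · show Polynomial.constantCoeff (PP t r).2 = _
      rw [h2]; ring
end

section
/- Fix an integer t ≥ 1 and define the polynomial sequences P_0(r), P_1(r) ∈ ℝ[p] as in the context. Then the coefficients of p satisfy: [p]P_0(1) = −t/2^t and [p]P_1(1) = −t/2^t, and for every r ≥ 2: [p]P_1(r) = (1 − 2^{−t})·[p]P_0(r−1) + ((t+2)/2^t − 2)·[1]P_0(r−1) + 2·(1 − (t+1)/2^t)·([1]P_0(r−1))², and [p]P_0(r) = (1 − 2^{−t})·[p]P_1(r−1) + ((t+2)/2^t − 2)·[1]P_1(r−1) + 2·(1 − (t+1)/2^t)·([1]P_1(r−1))² − t/2^t + (2t/2^t)·[1]P_1(r−1). -/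
/-! The linear coefficient of a product is `a₀b₁ + a₁b₀`, so along the recurrence only
constant and linear coefficients interact.  Every polynomial fed into a power has constant
coefficient `1/2`, because `q(0) = 1/2` and `p·U` vanishes at `p = 0`; the geometric sum
`S = ∑_{k<t} A^k` is then read off from `S·(A − 1) = A^t − 1`. -/

open Polynomial Finset

namespace Polynomial

variable {R : Type*} [CommSemiring R]

theorem coeff_zero_pow (A : R[X]) (n : ℕ) : (A ^ n).coeff 0 = A.coeff 0 ^ n := by
  simp only [← constantCoeff_apply, map_pow]

theorem coeff_one_pow (A : R[X]) (n : ℕ) :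
    (A ^ n).coeff 1 = n * A.coeff 1 * A.coeff 0 ^ (n - 1) := by
  simpa [← coe_pow] using PowerSeries.coeff_one_pow n (A : PowerSeries R)

end Polynomial

theorem coeff_one_pow_of_coeff_zero_eq_half {A : ℝ[X]} (hA : A.coeff 0 = 1 / 2) (n : ℕ) :
    (A ^ n).coeff 1 = 2 * n * (1 / 2) ^ n * A.coeff 1 := by
  rw [coeff_one_pow, hA]
  cases n with
  | zero => simp
  | succ n => rw [Nat.add_sub_cancel]; ring

theorem coeff_geom_sum_of_coeff_zero_eq_half {A : ℝ[X]} (hA : A.coeff 0 = 1 / 2) (t : ℕ) :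
    (∑ k ∈ range t, A ^ k).coeff 0 = 2 - 2 * (1 / 2) ^ t ∧
      (∑ k ∈ range t, A ^ k).coeff 1 = 4 * (1 - (t + 1) * (1 / 2) ^ t) * A.coeff 1 := by
  have hgeom := geom_sum_mul A t
  have h0 := congrArg (coeff · 0) hgeom
  have h1 := congrArg (coeff · 1) hgeom
  simp only [mul_coeff_zero, mul_coeff_one, coeff_sub, coeff_one_zero, coeff_zero_pow, hA,
    coeff_one_pow_of_coeff_zero_eq_half hA] at h0 h1
  simp only [coeff_one, one_ne_zero, if_false, sub_zero] at h1
  have hS0 : (∑ k ∈ range t, A ^ k).coeff 0 = 2 - 2 * (1 / 2) ^ t := by linarith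
  rw [hS0] at h1
  exact ⟨hS0, by linarith⟩

theorem coeff_zero_qP : qP.coeff 0 = 1 / 2 := by
  simp [qP]

theorem coeff_one_qP : qP.coeff 1 = -(1 / 2) := by
  simp [qP, coeff_one]

theorem coeff_zero_qP_add_X_mul (W : ℝ[X]) : (qP + X * W).coeff 0 = 1 / 2 := by
  rw [coeff_add, coeff_X_mul_zero, coeff_zero_qP, add_zero]

theorem coeff_one_qP_add_X_mul (W : ℝ[X]) : (qP + X * W).coeff 1 = W.coeff 0 - 1 / 2 := by
  rw [coeff_add, coeff_X_mul, coeff_one_qP]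
  ring

theorem coeff_one_qP_add_X_mul_pow (t : ℕ) (W : ℝ[X]) :
    ((qP + X * W) ^ t).coeff 1 = -(t : ℝ) / 2 ^ t + (2 * (t : ℝ) / 2 ^ t) * W.coeff 0 := by
  rw [coeff_one_pow_of_coeff_zero_eq_half (coeff_zero_qP_add_X_mul W), coeff_one_qP_add_X_mul,
    one_div_pow]
  field_simp
  ring

theorem coeff_one_qP_mul_mul_geom_sum (t : ℕ) (W : ℝ[X]) :
    (qP * W * ∑ k ∈ range t, (qP + X * W) ^ k).coeff 1 =
      (1 - (1 / 2 : ℝ) ^ t) * W.coeff 1 + (((t : ℝ) + 2) / 2 ^ t - 2) * W.coeff 0 +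
        2 * (1 - ((t : ℝ) + 1) / 2 ^ t) * W.coeff 0 ^ 2 := by
  obtain ⟨hS0, hS1⟩ := coeff_geom_sum_of_coeff_zero_eq_half (coeff_zero_qP_add_X_mul W) t
  rw [mul_coeff_one, mul_coeff_zero, mul_coeff_one, hS0, hS1, coeff_one_qP_add_X_mul,
    coeff_zero_qP, coeff_one_qP, one_div_pow]
  field_simp
  ring

theorem coeff_one_P0poly_one (t : ℕ) : (P0poly t 1).coeff 1 = -(t : ℝ) / 2 ^ t := by
  rw [P0poly, PP, coeff_one_pow_of_coeff_zero_eq_half coeff_zero_qP, coeff_one_qP, one_div_pow]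
  field_simp

theorem coeff_one_P1poly_one (t : ℕ) : (P1poly t 1).coeff 1 = -(t : ℝ) / 2 ^ t := by
  have h0 : (1 - qP).coeff 0 = 1 / 2 := by
    rw [coeff_sub, coeff_one_zero, coeff_zero_qP]
    norm_num
  rw [P1poly, PP, coeff_sub, coeff_one, if_neg one_ne_zero,
    coeff_one_pow_of_coeff_zero_eq_half h0, coeff_sub, coeff_one, if_neg one_ne_zero,
    coeff_one_qP, one_div_pow]
  field_simp
  ring

theorem P0poly_add_two (t r : ℕ) :
    P0poly t (r + 2) = qP * P1poly t (r + 1) * ∑ k ∈ range t, (qP + X * P1poly t (r + 1)) ^ k +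
      (qP + X * P1poly t (r + 1)) ^ t :=
  rfl

theorem P1poly_add_two (t r : ℕ) :
    P1poly t (r + 2) = qP * P0poly t (r + 1) * ∑ k ∈ range t, (qP + X * P0poly t (r + 1)) ^ k :=
  rfl

theorem ppoly_linear_coeff_recurrence_general (t : ℕ) :
    (P0poly t 1).coeff 1 = -(t : ℝ) / 2 ^ t ∧
    (P1poly t 1).coeff 1 = -(t : ℝ) / 2 ^ t ∧
    ∀ r : ℕ, 2 ≤ r →
      (P1poly t r).coeff 1 =
          (1 - (1 / 2 : ℝ) ^ t) * (P0poly t (r - 1)).coeff 1 +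
            (((t : ℝ) + 2) / 2 ^ t - 2) * (P0poly t (r - 1)).coeff 0 +
            2 * (1 - ((t : ℝ) + 1) / 2 ^ t) * ((P0poly t (r - 1)).coeff 0) ^ 2 ∧
        (P0poly t r).coeff 1 =
          (1 - (1 / 2 : ℝ) ^ t) * (P1poly t (r - 1)).coeff 1 +
            (((t : ℝ) + 2) / 2 ^ t - 2) * (P1poly t (r - 1)).coeff 0 +
            2 * (1 - ((t : ℝ) + 1) / 2 ^ t) * ((P1poly t (r - 1)).coeff 0) ^ 2 -
            (t : ℝ) / 2 ^ t + (2 * (t : ℝ) / 2 ^ t) * (P1poly t (r - 1)).coeff 0 := by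
  refine ⟨coeff_one_P0poly_one t, coeff_one_P1poly_one t, fun r hr => ?_⟩
  obtain ⟨r, rfl⟩ := Nat.exists_eq_add_of_le' hr
  rw [show r + 2 - 1 = r + 1 from rfl, P1poly_add_two, P0poly_add_two, coeff_add,
    coeff_one_qP_mul_mul_geom_sum, coeff_one_qP_mul_mul_geom_sum, coeff_one_qP_add_X_mul_pow]
  exact ⟨rfl, by ring⟩

/-- coefficients of `p` in `P_0(r), P_1(r)`: `[p]P_0(1) = [p]P_1(1) =
−t/2^t`, and for `r ≥ 2` the stated recurrences hold. -/
theorem ppoly_linear_coeff_recurrence (t : ℕ) (ht : 1 ≤ t) :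
    (P0poly t 1).coeff 1 = -(t : ℝ) / 2 ^ t ∧
    (P1poly t 1).coeff 1 = -(t : ℝ) / 2 ^ t ∧
    ∀ r : ℕ, 2 ≤ r →
      (P1poly t r).coeff 1 =
          (1 - (1 / 2 : ℝ) ^ t) * (P0poly t (r - 1)).coeff 1 +
            (((t : ℝ) + 2) / 2 ^ t - 2) * (P0poly t (r - 1)).coeff 0 +
            2 * (1 - ((t : ℝ) + 1) / 2 ^ t) * ((P0poly t (r - 1)).coeff 0) ^ 2 ∧
        (P0poly t r).coeff 1 =
          (1 - (1 / 2 : ℝ) ^ t) * (P1poly t (r - 1)).coeff 1 +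
            (((t : ℝ) + 2) / 2 ^ t - 2) * (P1poly t (r - 1)).coeff 0 +
            2 * (1 - ((t : ℝ) + 1) / 2 ^ t) * ((P1poly t (r - 1)).coeff 0) ^ 2 -
            (t : ℝ) / 2 ^ t + (2 * (t : ℝ) / 2 ^ t) * (P1poly t (r - 1)).coeff 0 :=
  ppoly_linear_coeff_recurrence_general t
end

section
/- Fix an integer t ≥ 1 and define the polynomial sequences P_0(r), P_1(r) ∈ ℝ[p] as in the context. Then for every even integer r with r ≥ 4·2^t, the coefficient of p in P_0(r) + P_1(r) satisfies [p](P_0(r) + P_1(r)) ≤ −(1/6)·2^t. -/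
/-!
Write `λ = 1 - 2^{-t}`. At `p = 0` the recursion gives `P_0(r)(0) + P_1(r)(0) = 1` and
`c_{r+1} = 1 - λ c_r` for `c_r = P_0(r)(0)`, so `c_r` converges geometrically, with ratio `λ`,
to the fixed point `1/(1+λ)`. Differentiating at `p = 0` gives `s_{r+1} = λ s_r + F(c_r)` for
`s_r = [p](P_0(r) + P_1(r))`, where `F ≤ 0` on `[0, 1]` and `F ≤ -1/3` near the fixed point.
As `λ^{2^t} ≤ e^{-1} ≤ 1/2`, after `2·2^t` steps `F(c_r) ≤ -1/3`, and `k ≥ 2^t` further steps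
push `s_r` below `-(1 - λ^k)/(3(1 - λ)) ≤ -2^t/6`.
-/

open Polynomial Finset

theorem derivative_geom_sum_mul {R : Type*} [CommRing R] (W : R[X]) (n : ℕ) :
    derivative (∑ k ∈ range n, W ^ k) * (W - 1) + (∑ k ∈ range n, W ^ k) * derivative W =
      C (n : R) * W ^ (n - 1) * derivative W := by
  simpa [derivative_mul, derivative_pow] using congrArg derivative (geom_sum_mul W n)

theorem natCast_mul_half_pow_pred (n : ℕ) :
    (n : ℝ) * (1 / 2) ^ (n - 1) = 2 * n * (1 / 2) ^ n := by
  cases n with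
  | zero => simp
  | succ n => rw [Nat.add_sub_cancel, pow_succ]; ring

theorem natCast_add_one_mul_half_pow_le_one (n : ℕ) : ((n : ℝ) + 1) * (1 / 2) ^ n ≤ 1 := by
  have h : ((n : ℝ) + 1) ≤ 2 ^ n := by exact_mod_cast Nat.lt_two_pow_self
  rwa [one_div_pow, ← div_eq_mul_one_div, div_le_one (by positivity)]

theorem one_sub_inv_pow_le_half {n : ℕ} (hn : 1 ≤ n) : (1 - 1 / (n : ℝ)) ^ n ≤ 1 / 2 := by
  have hexp : Real.exp (-1) ≤ 1 / 2 := by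
    rw [Real.exp_neg, one_div]
    exact inv_anti₀ (by norm_num) (by linarith [Real.add_one_le_exp 1])
  exact (Real.one_sub_div_pow_le_exp_neg (by exact_mod_cast hn)).trans hexp

theorem sub_fixedPoint_eq_of_affine {l b : ℝ} {x : ℕ → ℝ} (hl : 1 + l ≠ 0)
    (hx : ∀ n, x (n + 1) = b - l * x n) (n : ℕ) :
    x n - b / (1 + l) = (-l) ^ n * (x 0 - b / (1 + l)) := by
  induction n with
  | zero => simp
  | succ n ih =>
    rw [hx, pow_succ]
    field_simp at ih ⊢
    linear_combination (-l) * ih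

theorem le_neg_mul_geom_sum_of_affine {l δ : ℝ} {x f : ℕ → ℝ} (hl : 0 ≤ l)
    (hx : ∀ n, x (n + 1) = l * x n + f n) (hx0 : x 0 ≤ 0) (hf : ∀ n, f n ≤ 0) {N : ℕ}
    (hfN : ∀ n, N ≤ n → f n ≤ -δ) (k : ℕ) :
    x (N + k) ≤ -δ * ∑ i ∈ range k, l ^ i := by
  have hx_nonpos : ∀ n, x n ≤ 0 := by
    intro n
    induction n with
    | zero => exact hx0
    | succ n ih => rw [hx]; nlinarith [hf n]
  induction k with
  | zero => simpa using hx_nonpos N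
  | succ k ih =>
    rw [← add_assoc, hx, geom_sum_succ]
    nlinarith [hfN (N + k) (by omega)]

theorem coeff_one_eq_eval_zero_derivative (Q : ℝ[X]) : Q.coeff 1 = (derivative Q).eval 0 := by
  rw [← coeff_zero_eq_eval_zero, coeff_derivative]; norm_num

theorem eval_zero_qP : qP.eval 0 = 1 / 2 := by simp [qP]

theorem eval_derivative_qP (x : ℝ) : (derivative qP).eval x = -(1 / 2) := by simp [qP]

theorem eval_zero_qP_add_X_mul (U : ℝ[X]) : (qP + X * U).eval 0 = 1 / 2 := by simp [qP]

theorem eval_zero_derivative_qP_add_X_mul (U : ℝ[X]) :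
    (derivative (qP + X * U)).eval 0 = U.eval 0 - 1 / 2 := by
  simp [qP]; ring

theorem eval_zero_geom_sum_of_eval_zero_eq_half {W : ℝ[X]} (hW : W.eval 0 = 1 / 2) (n : ℕ) :
    (∑ k ∈ range n, W ^ k).eval 0 = 2 * (1 - (1 / 2) ^ n) := by
  have h := congrArg (eval 0) (geom_sum_mul W n)
  simp only [eval_mul, eval_sub, eval_pow, eval_one, hW] at h
  linear_combination -2 * h

theorem eval_zero_derivative_geom_sum_of_eval_zero_eq_half {W : ℝ[X]} (hW : W.eval 0 = 1 / 2)
    (n : ℕ) :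
    (derivative (∑ k ∈ range n, W ^ k)).eval 0 =
      4 * (1 - (n + 1) * (1 / 2) ^ n) * (derivative W).eval 0 := by
  have h := congrArg (eval 0) (derivative_geom_sum_mul W n)
  simp only [eval_add, eval_mul, eval_sub, eval_pow, eval_one, eval_C, hW,
    eval_zero_geom_sum_of_eval_zero_eq_half hW, natCast_mul_half_pow_pred] at h
  linear_combination -2 * h

theorem P0poly_zero (t : ℕ) : P0poly t 0 = 1 := rfl

theorem P1poly_zero (t : ℕ) : P1poly t 0 = 0 := rfl

theorem P0poly_one (t : ℕ) : P0poly t 1 = qP ^ t := rfl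

theorem P1poly_one (t : ℕ) : P1poly t 1 = 1 - (1 - qP) ^ t := rfl

theorem eval_zero_P1poly (t : ℕ) : ∀ r, (P1poly t r).eval 0 = 1 - (P0poly t r).eval 0
  | 0 => by simp [P0poly_zero, P1poly_zero]
  | 1 => by simp only [P0poly_one, P1poly_one, eval_sub, eval_one, eval_pow, eval_zero_qP]; ring
  | r + 2 => by
    have ih := eval_zero_P1poly t (r + 1)
    simp only [P0poly_add_two, P1poly_add_two, eval_add, eval_mul, eval_pow, eval_zero_qP, eval_X,
      zero_mul, add_zero, eval_zero_geom_sum_of_eval_zero_eq_half (eval_zero_qP_add_X_mul _)]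
    linear_combination (1 - (1 / 2 : ℝ) ^ t) * ih

theorem eval_zero_P0poly_succ (t r : ℕ) :
    (P0poly t (r + 1)).eval 0 = 1 - (1 - (1 / 2) ^ t) * (P0poly t r).eval 0 := by
  cases r with
  | zero => simp only [zero_add, P0poly_zero, P0poly_one, eval_pow, eval_one, eval_zero_qP]; ring
  | succ r =>
    simp only [P0poly_add_two, eval_add, eval_mul, eval_pow, eval_zero_qP, eval_X, zero_mul,
      add_zero, eval_zero_geom_sum_of_eval_zero_eq_half (eval_zero_qP_add_X_mul _),
      eval_zero_P1poly]
    ring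

/-- The inhomogeneous term of the recurrence for `[p](P_0(r) + P_1(r))`, as a function of
`c = P_0(r)(0)`. -/
noncomputable def forcing (t : ℕ) (c : ℝ) : ℝ :=
  -(1 - (1 / 2) ^ t) + 4 * (1 - (t + 1) * (1 / 2) ^ t) * (c - 1 / 2) ^ 2 -
    2 * t * (1 / 2) ^ t * (c - 1 / 2)

theorem coeff_one_P0poly_add_P1poly_succ (t r : ℕ) :
    (P0poly t (r + 1) + P1poly t (r + 1)).coeff 1 =
      (1 - (1 / 2) ^ t) * (P0poly t r + P1poly t r).coeff 1 + forcing t ((P0poly t r).eval 0) := by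
  simp only [coeff_one_eq_eval_zero_derivative, derivative_add, eval_add]
  cases r with
  | zero =>
    have h : (1 : ℝ) - 1 / 2 = 1 / 2 := by norm_num
    simp only [zero_add, P0poly_zero, P1poly_zero, P0poly_one, P1poly_one, derivative_pow,
      derivative_sub, derivative_one, derivative_zero, eval_sub, eval_mul, eval_pow, eval_C,
      eval_one, eval_zero, eval_zero_qP, eval_derivative_qP, h, natCast_mul_half_pow_pred, forcing]
    ring
  | succ r =>
    have hW := eval_zero_qP_add_X_mul
    simp only [P0poly_add_two, P1poly_add_two, derivative_add, derivative_mul, derivative_pow,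
      eval_add, eval_mul, eval_pow, eval_C, eval_zero_qP, eval_derivative_qP, eval_X,
      derivative_X, eval_one, zero_mul, add_zero,
      eval_zero_geom_sum_of_eval_zero_eq_half (hW _),
      eval_zero_derivative_geom_sum_of_eval_zero_eq_half (hW _),
      natCast_mul_half_pow_pred, eval_zero_P1poly, forcing]
    ring

theorem forcing_nonpos (t : ℕ) {c : ℝ} (h0 : 0 ≤ c) (h1 : c ≤ 1) : forcing t c ≤ 0 := by
  have hA : 0 ≤ 1 - (t + 1) * (1 / 2 : ℝ) ^ t := by
    linarith [natCast_add_one_mul_half_pow_le_one t]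
  have hta : 0 ≤ (t : ℝ) * (1 / 2) ^ t := by positivity
  have he : (c - 1 / 2) ^ 2 ≤ 1 / 4 := by nlinarith
  unfold forcing
  nlinarith [mul_le_mul_of_nonneg_left he hA]

theorem forcing_le_neg_third {t : ℕ} (ht : 1 ≤ t) {c : ℝ} (hlo : -(1 / 8) ≤ c - 1 / 2)
    (hhi : c - 1 / 2 ≤ (1 / 2) ^ t / 3 + 1 / 8) : forcing t c ≤ -(1 / 3) := by
  have ha1 : (1 / 2 : ℝ) ^ t ≤ 1 / 2 := pow_le_of_le_one (by norm_num) (by norm_num) (by omega)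
  set a : ℝ := (1 / 2) ^ t
  have ha0 : 0 < a := by positivity
  have ht1 : (1 : ℝ) ≤ t := by exact_mod_cast ht
  have hA0 : 0 ≤ 1 - (t + 1) * a := by linarith [natCast_add_one_mul_half_pow_le_one t]
  have hA1 : 1 - (t + 1) * a ≤ 1 - 2 * a := by nlinarith
  have he : (c - 1 / 2) ^ 2 ≤ (a / 3 + 1 / 8) ^ 2 := by nlinarith
  have hlin : -(2 * t * a * (c - 1 / 2)) ≤ (1 - a) / 4 := by nlinarith
  have hquad : (1 - (t + 1) * a) * (c - 1 / 2) ^ 2 ≤ (1 - 2 * a) * (a / 3 + 1 / 8) ^ 2 := by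
    nlinarith [mul_le_mul he hA1 hA0 (by nlinarith)]
  unfold forcing
  nlinarith

theorem one_sub_half_pow_pow_two_pow_le_half (t : ℕ) :
    (1 - (1 / 2 : ℝ) ^ t) ^ 2 ^ t ≤ 1 / 2 := by
  have h := one_sub_inv_pow_le_half (Nat.one_le_two_pow (n := t))
  rwa [Nat.cast_pow, Nat.cast_ofNat, ← one_div_pow] at h

theorem abs_eval_zero_P0poly_sub_fixedPoint_le (t n : ℕ) :
    |(P0poly t n).eval 0 - 1 / (1 + (1 - (1 / 2) ^ t))| ≤
      (1 - (1 / 2) ^ t) ^ n * (1 - 1 / (1 + (1 - (1 / 2) ^ t))) := by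
  have ha0 : (0 : ℝ) < (1 / 2) ^ t := by positivity
  have ha1 : (1 / 2 : ℝ) ^ t ≤ 1 := pow_le_one₀ (by norm_num) (by norm_num)
  have h := sub_fixedPoint_eq_of_affine (x := fun n ↦ (P0poly t n).eval 0) (b := 1)
    (by linarith) (eval_zero_P0poly_succ t) n
  have hfix1 : 1 / (1 + (1 - (1 / 2 : ℝ) ^ t)) ≤ 1 := by rw [div_le_one (by linarith)]; linarith
  simp only [P0poly_zero, eval_one] at h
  rw [h, abs_mul, abs_pow, abs_neg, abs_of_nonneg (by linarith), abs_of_nonneg (by linarith)]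

theorem forcing_eval_zero_P0poly_nonpos (t n : ℕ) : forcing t ((P0poly t n).eval 0) ≤ 0 := by
  have h := abs_le.mp (abs_eval_zero_P0poly_sub_fixedPoint_le t n)
  set a : ℝ := (1 / 2) ^ t
  have ha0 : 0 < a := by positivity
  have ha1 : a ≤ 1 := pow_le_one₀ (by norm_num) (by norm_num)
  have hpow : (1 - a) ^ n ≤ 1 := pow_le_one₀ (by linarith) (by linarith)
  have hfix : 1 / 2 ≤ 1 / (1 + (1 - a)) := by
    rw [div_le_div_iff₀ (by norm_num) (by linarith)]; linarith
  have hfix1 : 1 / (1 + (1 - a)) ≤ 1 := by rw [div_le_one (by linarith)]; linarith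
  have hdist : (1 - a) ^ n * (1 - 1 / (1 + (1 - a))) ≤ 1 - 1 / (1 + (1 - a)) :=
    mul_le_of_le_one_left (by linarith) hpow
  exact forcing_nonpos t (by linarith [h.1]) (by linarith [h.2])

theorem forcing_eval_zero_P0poly_le_neg_third {t n : ℕ} (ht : 1 ≤ t) (hn : 2 * 2 ^ t ≤ n) :
    forcing t ((P0poly t n).eval 0) ≤ -(1 / 3) := by
  have h := abs_le.mp (abs_eval_zero_P0poly_sub_fixedPoint_le t n)
  have ha1 : (1 / 2 : ℝ) ^ t ≤ 1 / 2 := pow_le_of_le_one (by norm_num) (by norm_num) (by omega)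
  have hhalf := one_sub_half_pow_pow_two_pow_le_half t
  set a : ℝ := (1 / 2) ^ t
  have ha0 : 0 < a := by positivity
  have hpow : (1 - a) ^ n ≤ 1 / 4 :=
    calc (1 - a) ^ n ≤ (1 - a) ^ (2 * 2 ^ t) := pow_le_pow_of_le_one (by linarith) (by linarith) hn
      _ = ((1 - a) ^ 2 ^ t) ^ 2 := by rw [← pow_mul, mul_comm]
      _ ≤ 1 / 4 := by nlinarith [pow_nonneg (by linarith : 0 ≤ 1 - a) (2 ^ t)]
  have hfix : 1 / (1 + (1 - a)) = 1 / 2 + a / (2 * (2 - a)) := by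
    rw [div_add_div _ _ two_ne_zero (by linarith), div_eq_div_iff (by linarith) (by nlinarith)]
    ring
  have hfix0 : 0 ≤ a / (2 * (2 - a)) := div_nonneg ha0.le (by linarith)
  have hfix1 : a / (2 * (2 - a)) ≤ a / 3 := by
    rw [div_le_div_iff₀ (by linarith) (by norm_num)]; nlinarith
  rw [hfix] at h
  have hdist : (1 - a) ^ n * (1 - (1 / 2 + a / (2 * (2 - a)))) ≤ 1 / 8 := by
    nlinarith [pow_nonneg (by linarith : 0 ≤ 1 - a) n]
  exact forcing_le_neg_third ht (by linarith [h.1]) (by linarith [h.2])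

theorem ppoly_linear_coeff_negative_general (t : ℕ) (ht : 1 ≤ t) (r : ℕ)
    (hr : 4 * 2 ^ t ≤ r) :
    (P0poly t r + P1poly t r).coeff 1 ≤ -(1 / 6) * 2 ^ t := by
  obtain ⟨k, rfl⟩ : ∃ k, r = 2 * 2 ^ t + k := ⟨r - 2 * 2 ^ t, by omega⟩
  have ha0 : (0 : ℝ) < (1 / 2) ^ t := by positivity
  have ha1 : (1 / 2 : ℝ) ^ t ≤ 1 / 2 := pow_le_of_le_one (by norm_num) (by norm_num) (by omega)
  have hdescent := le_neg_mul_geom_sum_of_affine (l := 1 - (1 / 2) ^ t)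
    (x := fun n ↦ (P0poly t n + P1poly t n).coeff 1) (by linarith)
    (coeff_one_P0poly_add_P1poly_succ t) (by simp [P0poly_zero, P1poly_zero, coeff_one])
    (forcing_eval_zero_P0poly_nonpos t) (fun _ hn ↦ forcing_eval_zero_P0poly_le_neg_third ht hn) k
  have hpow : (1 - (1 / 2 : ℝ) ^ t) ^ k ≤ 1 / 2 :=
    (pow_le_pow_of_le_one (by linarith) (by linarith) (by omega : 2 ^ t ≤ k)).trans
      (one_sub_half_pow_pow_two_pow_le_half t)
  have hsum : ∑ i ∈ range k, (1 - (1 / 2 : ℝ) ^ t) ^ i = (1 - (1 - (1 / 2) ^ t) ^ k) * 2 ^ t := by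
    have h2 : (1 / 2 : ℝ) ^ t * 2 ^ t = 1 := by rw [← mul_pow]; norm_num
    rw [geom_sum_eq (by linarith), div_eq_iff (by linarith)]
    linear_combination (1 - (1 - (1 / 2 : ℝ) ^ t) ^ k) * h2
  rw [hsum] at hdescent
  nlinarith [pow_pos (two_pos : (0 : ℝ) < 2) t]

/-- for every even `r ≥ 4·2^t`,
`[p](P_0(r) + P_1(r)) ≤ −(1/6)·2^t`. -/
theorem ppoly_linear_coeff_negative (t : ℕ) (ht : 1 ≤ t) (r : ℕ) (hreven : Even r)
    (hr : 4 * 2 ^ t ≤ r) :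
    (P0poly t r + P1poly t r).coeff 1 ≤ -(1 / 6) * 2 ^ t :=
  ppoly_linear_coeff_negative_general t ht r hr
end
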